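/- Let P(λ) = [[A(λ), B(λ)], [-C(λ), D(λ)]] be a polynomial system matrix (A(λ) regular, n×n) with transfer function G(λ). Assume A(λ) and C(λ) are right coprime. If H_2(λ) is a right polynomial basis of G(λ) and H_1(λ) := -A(λ)^{-1}B(λ)H_2(λ), then H_1(λ) is a polynomial matrix and the columns of [H_1(λ); H_2(λ)] form a right polynomial basis of P(λ). -/

import Mathlib

open Polynomial Matrix

noncomputable section

variable {F : Type*} [Field F]

/-- The natural embedding of a polynomial matrix into the rational functions. -/
def toRF {a b : Type*} (M : Matrix a b (Polynomial F)) : Matrix a b (RatFunc F) :=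
  M.map (algebraMap (Polynomial F) (RatFunc F))

/-- The columns of the polynomial matrix `N`, regarded as rational vectors, form a basis of
the right null-space of the rational matrix `M`. -/
def IsRightPolyBasis {a b : Type*} [Fintype a] [Fintype b] {l : ℕ}
    (M : Matrix a b (RatFunc F)) (N : Matrix b (Fin l) (Polynomial F)) : Prop :=
  LinearIndependent (RatFunc F) (fun j : Fin l => (toRF N)ᵀ j) ∧
    Submodule.span (RatFunc F) (Set.range fun j : Fin l => (toRF N)ᵀ j) =
      LinearMap.ker M.mulVecLin

/-!
Over the field of rational functions, a vector `(x₁, x₂)` lies in the null-space of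
`P = [[A, B], [-C, D]]` exactly when `x₁ = -A⁻¹ B x₂` and `G x₂ = 0`, so the injective
map `x₂ ↦ (-A⁻¹ B x₂, x₂)` carries the null-space of `G` onto that of `P`, and with it any
basis.
That `H₁ = -A⁻¹ B H₂` is polynomial comes from the Bezout identity: `A H₁ = -B H₂` and
`C H₁ = D H₂` (because `G H₂ = 0`) are polynomial, hence so is
`H₁ = X (A H₁) + Y (C H₁) = -X B H₂ + Y D H₂`.
-/

namespace Matrix

variable {R : Type*} {a b c : Type*}

theorem transpose_mul_apply [CommSemiring R] [Fintype b] (M : Matrix a b R) (N : Matrix b c R)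
    (j : c) : (M * N)ᵀ j = M *ᵥ Nᵀ j := by
  rw [transpose_mul, mul_apply_eq_vecMul, vecMul_transpose]

theorem mul_eq_zero_of_span_le_ker [CommSemiring R] [Fintype b] {M : Matrix a b R}
    {N : Matrix b c R}
    (h : Submodule.span R (Set.range fun j => Nᵀ j) ≤ LinearMap.ker M.mulVecLin) :
    M * N = 0 := by
  rw [← transpose_eq_zero]
  refine funext fun j => ?_
  rw [transpose_mul_apply]
  exact h (Submodule.subset_span ⟨j, rfl⟩)

theorem ker_fromRows_one_mulVecLin [CommSemiring R] [Fintype b] [DecidableEq b]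
    (T : Matrix a b R) :
    LinearMap.ker (fromRows T (1 : Matrix b b R)).mulVecLin = ⊥ := by
  refine LinearMap.ker_eq_bot'.mpr fun x hx => ?_
  ext i
  simpa using congrFun hx (Sum.inr i)

theorem eq_map_of_bezout {S : Type*} [CommRing R] [CommRing S] (f : R →+* S) {n p l : Type*}
    [Fintype n] [Fintype p] [DecidableEq n] {A : Matrix n n R} {C : Matrix p n R}
    {X : Matrix n n R} {Y : Matrix n p R} (hXY : X * A + Y * C = 1)
    {V : Matrix n l S} {U : Matrix n l R} {W : Matrix p l R}
    (hU : A.map f * V = U.map f) (hW : C.map f * V = W.map f) :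
    V = (X * U + Y * W).map f := by
  have hXY' : X.map f * A.map f + Y.map f * C.map f = 1 := by
    rw [← Matrix.map_mul, ← Matrix.map_mul, ← Matrix.map_add _ f.map_add, hXY,
      Matrix.map_one f f.map_zero f.map_one]
  calc V = (X.map f * A.map f + Y.map f * C.map f) * V := by rw [hXY', Matrix.one_mul]
    _ = (X * U + Y * W).map f := by
      rw [Matrix.add_mul, Matrix.mul_assoc, Matrix.mul_assoc, hU, hW, Matrix.map_add _ f.map_add,
        Matrix.map_mul, Matrix.map_mul]

variable [CommRing R] {n m p : Type*} [Fintype n] [DecidableEq n] [Fintype m] [DecidableEq m]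

theorem fromBlocks_mul_fromRows_inv_mul_one {A : Matrix n n R} (hA : IsUnit A.det)
    (B : Matrix n m R) (C : Matrix p n R) (D : Matrix p m R) :
    fromBlocks A B (-C) D * fromRows (-(A⁻¹ * B)) (1 : Matrix m m R) =
      fromRows 0 (D + C * A⁻¹ * B) := by
  rw [fromBlocks_mul_fromRows, Matrix.mul_neg, mul_nonsing_inv_cancel_left _ _ hA,
    Matrix.mul_one, Matrix.mul_one, neg_add_cancel, Matrix.neg_mul, Matrix.mul_neg, neg_neg,
    Matrix.mul_assoc, add_comm]

theorem ker_fromBlocks_mulVecLin {A : Matrix n n R} (hA : IsUnit A.det)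
    (B : Matrix n m R) (C : Matrix p n R) (D : Matrix p m R) :
    LinearMap.ker (fromBlocks A B (-C) D).mulVecLin =
      (LinearMap.ker (D + C * A⁻¹ * B).mulVecLin).map
        (fromRows (-(A⁻¹ * B)) (1 : Matrix m m R)).mulVecLin := by
  have hPE := fromBlocks_mul_fromRows_inv_mul_one hA B C D
  ext v
  simp only [LinearMap.mem_ker, Submodule.mem_map, mulVecLin_apply]
  constructor
  · intro hv
    have hv₁ : A *ᵥ (v ∘ Sum.inl) + B *ᵥ (v ∘ Sum.inr) = 0 := by
      funext i; simpa [fromBlocks_mulVec] using congrFun hv (Sum.inl i)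
    set x := v ∘ Sum.inr
    have hv₁' : v ∘ Sum.inl = -(A⁻¹ * B) *ᵥ x := by
      rw [Matrix.neg_mulVec, ← mulVec_mulVec, ← Matrix.mulVec_neg,
        ← eq_neg_of_add_eq_zero_left hv₁, mulVec_mulVec, nonsing_inv_mul _ hA, one_mulVec]
    have hvx : fromRows (-(A⁻¹ * B)) (1 : Matrix m m R) *ᵥ x = v := by
      rw [fromRows_mulVec, one_mulVec, ← hv₁']
      exact Sum.elim_comp_inl_inr v
    refine ⟨x, ?_, hvx⟩
    have hGx : fromRows (0 : Matrix n m R) (D + C * A⁻¹ * B) *ᵥ x = 0 := by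
      rw [← hPE, ← mulVec_mulVec, hvx, hv]
    funext i
    simpa using congrFun hGx (Sum.inr i)
  · rintro ⟨x, hx, rfl⟩
    rw [mulVec_mulVec, hPE, fromRows_mulVec, hx, zero_mulVec]
    exact Sum.elim_zero_zero

end Matrix

theorem toRF_mul {a b c : Type*} [Fintype b] (M : Matrix a b F[X]) (N : Matrix b c F[X]) :
    toRF (M * N) = toRF M * toRF N :=
  Matrix.map_mul

theorem toRF_neg {a b : Type*} (M : Matrix a b F[X]) : toRF (-M) = -toRF M :=
  Matrix.map_neg _ (map_neg _) M

theorem isUnit_det_toRF {n : Type*} [Fintype n] [DecidableEq n]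
    {A : Matrix n n F[X]} (hA : A.det ≠ 0) : IsUnit (toRF A).det := by
  rw [isUnit_iff_ne_zero, toRF, ← RingHom.mapMatrix_apply, ← RingHom.map_det]
  exact (map_ne_zero_iff _ (IsFractionRing.injective F[X] (RatFunc F))).mpr hA

theorem IsRightPolyBasis.fromRows {a b c a' : Type*} [Fintype a] [Fintype b] [DecidableEq b]
    [Fintype c] [Fintype a'] {l : ℕ} {M : Matrix a b (RatFunc F)} {N : Matrix b (Fin l) F[X]}
    (h : IsRightPolyBasis M N) {M' : Matrix a' (c ⊕ b) (RatFunc F)} (T : Matrix c b (RatFunc F))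
    {N₁ : Matrix c (Fin l) F[X]} (hN₁ : toRF N₁ = T * toRF N)
    (hker : LinearMap.ker M'.mulVecLin =
      (LinearMap.ker M.mulVecLin).map (Matrix.fromRows T (1 : Matrix b b (RatFunc F))).mulVecLin) :
    IsRightPolyBasis M' (Matrix.fromRows N₁ N) := by
  have hcols : (fun j => (toRF (Matrix.fromRows N₁ N))ᵀ j) =
      (Matrix.fromRows T (1 : Matrix b b (RatFunc F))).mulVecLin ∘ fun j => (toRF N)ᵀ j := by
    have : toRF (Matrix.fromRows N₁ N) = Matrix.fromRows T 1 * toRF N := by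
      rw [fromRows_mul, Matrix.one_mul, ← hN₁]
      exact fromRows_map N₁ N _
    funext j
    rw [this, transpose_mul_apply]
    rfl
  unfold IsRightPolyBasis
  rw [hcols, hker]
  exact ⟨h.1.map' _ (ker_fromRows_one_mulVecLin T),
    by rw [Set.range_comp, Submodule.span_image, h.2]⟩

/-- Let `P = [[A,B],[-C,D]]` be a polynomial system matrix with transfer
function `G`, and suppose `A` and `C` are right coprime (Bezout identity). If `H₂` is a right
polynomial basis of `G` and `H₁ := -A⁻¹ B H₂`, then `H₁` is a polynomial matrix and the
columns of `[H₁; H₂]` form a right polynomial basis of `P`. -/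
theorem rightPolyBasis_of_transferFunction
    {n p m l : ℕ}
    (A : Matrix (Fin n) (Fin n) (Polynomial F))
    (B : Matrix (Fin n) (Fin m) (Polynomial F))
    (C : Matrix (Fin p) (Fin n) (Polynomial F))
    (D : Matrix (Fin p) (Fin m) (Polynomial F))
    (hA : A.det ≠ 0)
    (hcoprime : ∃ (X : Matrix (Fin n) (Fin n) (Polynomial F))
        (Y : Matrix (Fin n) (Fin p) (Polynomial F)), X * A + Y * C = 1)
    (G : Matrix (Fin p) (Fin m) (RatFunc F))
    (hG : G = toRF D + toRF C * (toRF A)⁻¹ * toRF B)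
    (P : Matrix (Fin n ⊕ Fin p) (Fin n ⊕ Fin m) (RatFunc F))
    (hP : P = toRF (Matrix.fromBlocks A B (-C) D))
    (H₂ : Matrix (Fin m) (Fin l) (Polynomial F))
    (hH₂ : IsRightPolyBasis G H₂) :
    ∃ H₁ : Matrix (Fin n) (Fin l) (Polynomial F),
      toRF H₁ = -((toRF A)⁻¹ * toRF B * toRF H₂) ∧
      IsRightPolyBasis P (Matrix.fromRows H₁ H₂) := by
  obtain ⟨X, Y, hXY⟩ := hcoprime
  have hA' := isUnit_det_toRF hA
  have hGH₂ : G * toRF H₂ = 0 := mul_eq_zero_of_span_le_ker hH₂.2.le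
  have hH₁ : toRF (X * -(B * H₂) + Y * (D * H₂)) = -((toRF A)⁻¹ * toRF B * toRF H₂) := by
    refine (eq_map_of_bezout _ hXY ?_ ?_).symm
    · show toRF A * _ = toRF _
      rw [Matrix.mul_neg, Matrix.mul_assoc, mul_nonsing_inv_cancel_left _ _ hA', toRF_neg,
        toRF_mul]
    · rw [hG, Matrix.add_mul, add_eq_zero_iff_eq_neg] at hGH₂
      show toRF C * _ = toRF _
      rw [toRF_mul, hGH₂, Matrix.mul_neg, ← Matrix.mul_assoc, ← Matrix.mul_assoc]
  refine ⟨_, hH₁, hH₂.fromRows _ (by rw [hH₁, Matrix.neg_mul]) ?_⟩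
  rw [hP, hG, toRF, fromBlocks_map, Matrix.map_neg _ (map_neg _)]
  exact ker_fromBlocks_mulVecLin hA' _ _ _

end
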